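/- arXiv:0905.0195 — 10 statements merged into one kernel-verified Lean document; each statement's English description precedes it below -/
import Mathlib

section
/- For integers v ≥ 1 and 1 ≤ t ≤ k, the rank over ℝ of the t-inclusion matrix M_t(v,k) equals ∑_{i=0}^{t} C(k,i)·(v−1)^i. -/
/-!
Read the row `(S, u)` as the indicator of the subcube `{x | x = u on S}`. Splitting on a free
coordinate `j`, `1[x = u on S] = ∑_b 1[x = u on S, x_j = b]`, so the row space is spanned by the
subcube indicators with `|S| ≤ t`. Conversely, `1[x_j = 0] = 1 - ∑_{b ≠ 0} 1[x_j = b]` removes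
every prescribed value `0`, so the row space is spanned by the indicators `F_y` of
`{x | x = y on supp y}` with `|supp y| ≤ t`. These are rows of the `k`-th Kronecker power of
`1 + N`, where `N` is zero outside row `0`, has zero diagonal and satisfies `N² = 0`; so `1 + N`
and its Kronecker power are invertible and the `F_y` are linearly independent. Counting the `y`
by support size gives `∑ C(k,i) (v-1)^i`.
-/

/-- The `t`-inclusion matrix `M_t(v,k)`: columns are indexed by `k`-tuples
`x : Fin k → Fin v`; rows are indexed by pairs `(I, u)` where `I` is a
`t`-element subset of `Fin k` and `u : Fin k → Fin v` is considered only
through its values on `I`.  The entry in row `(I,u)` and column `x` is `1`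
if `x i = u i` for every `i ∈ I`, and `0` otherwise. -/
def inclusionMatrix (v k t : ℕ) :
    Matrix ({I : Finset (Fin k) // I.card = t} × (Fin k → Fin v))
      (Fin k → Fin v) ℝ :=
  fun r x => if ∀ i ∈ r.1.1, x i = r.2 i then 1 else 0

open Finset

namespace Matrix

variable {ι α β γ R : Type*} [Fintype ι] [CommSemiring R]

def piTensor (M : ι → Matrix α β R) : Matrix (ι → α) (ι → β) R :=
  of fun y x => ∏ i, M i (y i) (x i)

theorem piTensor_mul [DecidableEq ι] [Fintype β] (M : ι → Matrix α β R) (N : ι → Matrix β γ R) :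
    piTensor M * piTensor N = piTensor fun i => M i * N i := by
  ext y z
  simp only [mul_apply, piTensor, of_apply, ← prod_mul_distrib]
  exact (Fintype.prod_sum fun i b => M i (y i) b * N i b (z i)).symm

theorem piTensor_one [DecidableEq α] : piTensor (fun _ : ι => (1 : Matrix α α R)) = 1 := by
  ext y x
  simp only [piTensor, of_apply, one_apply, Fintype.prod_boole, funext_iff]

theorem isUnit_piTensor [DecidableEq ι] [Fintype α] [DecidableEq α] {M : ι → Matrix α α R}
    (hM : ∀ i, IsUnit (M i)) : IsUnit (piTensor M) := by
  choose u hu using hM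
  refine isUnit_iff_exists.2 ⟨piTensor fun i => ↑(u i)⁻¹, ?_, ?_⟩ <;>
    simp [piTensor_mul, ← hu, piTensor_one]

end Matrix

namespace InclusionMatrix

open Matrix Submodule

variable {ι α R : Type*} [CommRing R] [DecidableEq α]

variable (R) in
def cubeIndicator (S : Finset ι) (u : ι → α) : (ι → α) → R :=
  fun x => if ∀ i ∈ S, x i = u i then 1 else 0

theorem cubeIndicator_congr {S : Finset ι} {u u' : ι → α} (h : ∀ i ∈ S, u i = u' i) :
    cubeIndicator R S u = cubeIndicator R S u' := by
  ext x
  simp only [cubeIndicator]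
  congr 1
  exact propext (forall₂_congr fun i hi => by rw [h i hi])

section Zero

variable [Zero α]

variable (R) in
def zeroRowMatrix : Matrix α α R := of fun a x => if a = 0 ∧ x ≠ 0 then 1 else 0

theorem one_add_zeroRowMatrix_apply (a x : α) :
    (1 + zeroRowMatrix R) a x = if a = 0 ∨ x = a then (1 : R) else 0 := by
  by_cases ha : a = 0 <;> by_cases hx : x = a <;> simp_all [zeroRowMatrix, one_apply, eq_comm]

theorem zeroRowMatrix_mul_self [Fintype α] :
    zeroRowMatrix R * zeroRowMatrix R = (0 : Matrix α α R) := by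
  ext a x
  refine sum_eq_zero fun b _ => ?_
  by_cases hb : b = 0 <;> simp [zeroRowMatrix, hb]

variable [Fintype ι]

def support (y : ι → α) : Finset ι := {i | y i ≠ 0}

variable (R) in
def cubeMatrix : Matrix (ι → α) (ι → α) R := piTensor fun _ => 1 + zeroRowMatrix R

theorem cubeMatrix_row (y : ι → α) : cubeMatrix R y = cubeIndicator R (support y) y := by
  ext x
  simp only [cubeMatrix, piTensor, of_apply, one_add_zeroRowMatrix_apply, Fintype.prod_boole,
    cubeIndicator, support, mem_filter, mem_univ, true_and]
  congr 1
  exact propext ⟨fun h i hi => (h i).resolve_left hi, fun h i => or_iff_not_imp_left.2 (h i)⟩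

theorem isUnit_cubeMatrix [DecidableEq ι] [Fintype α] :
    IsUnit (cubeMatrix R : Matrix (ι → α) (ι → α) R) :=
  isUnit_piTensor fun _ => IsNilpotent.isUnit_one_add ⟨2, by rw [sq, zeroRowMatrix_mul_self]⟩

end Zero

variable [DecidableEq ι] [Fintype α]

theorem cubeIndicator_eq_sum_insert {S : Finset ι} {j : ι} (hj : j ∉ S) (u : ι → α) :
    cubeIndicator R S u =
      ∑ b, cubeIndicator R (insert j S) (Function.update u j b) := by
  ext x
  rw [Finset.sum_apply, Fintype.sum_eq_single (x j)]
  · have hne : ∀ i ∈ S, i ≠ j := fun i hi h => hj (h ▸ hi)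
    simp +contextual [cubeIndicator, hne, Function.update_of_ne]
  · intro b hb
    simp [cubeIndicator, Ne.symm hb]

theorem cubeIndicator_mem_span_of_subset {S T : Finset ι} (hST : S ⊆ T) (u : ι → α) :
    cubeIndicator R S u ∈ span R (Set.range (cubeIndicator R T)) := by
  suffices h : ∀ D S, Disjoint S D → ∀ u : ι → α,
      cubeIndicator R S u ∈ span R (Set.range (cubeIndicator R (S ∪ D))) by
    simpa [union_sdiff_of_subset hST] using h (T \ S) S disjoint_sdiff u
  intro D
  induction D using Finset.induction_on with
  | empty => exact fun S _ u => by simpa using subset_span (Set.mem_range_self u)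
  | insert j D hjD ih =>
    intro S hSD u
    rw [Finset.disjoint_insert_right] at hSD
    rw [cubeIndicator_eq_sum_insert hSD.1, union_insert, ← insert_union]
    exact sum_mem fun b _ => ih _ (Finset.disjoint_insert_left.2 ⟨hjD, hSD.2⟩) _

variable [Zero α]

theorem cubeIndicator_eq_sub_sum {S : Finset ι} {j : ι} (hj : j ∈ S) {u : ι → α} (hu : u j = 0) :
    cubeIndicator R S u = cubeIndicator R (S.erase j) u -
      ∑ b ∈ univ.erase 0, cubeIndicator R S (Function.update u j b) := by
  rw [eq_sub_iff_add_eq, cubeIndicator_eq_sum_insert (notMem_erase j S), insert_erase hj,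
    ← add_sum_erase _ _ (mem_univ 0), ← hu, Function.update_eq_self]

variable [Fintype ι]

theorem cubeIndicator_mem_span_cubeMatrix (S : Finset ι) (u : ι → α) :
    cubeIndicator R S u ∈ span R (cubeMatrix R '' {y | support y ⊆ S}) := by
  generalize hZ : S.filter (u · = 0) = Z
  induction Z using Finset.induction_on generalizing S u with
  | empty =>
    have hu : ∀ i ∈ S, u i ≠ 0 := by simpa [filter_eq_empty_iff] using hZ
    have hsupp : support (S.piecewise u 0) = S := by
      ext i
      by_cases hi : i ∈ S <;> simp [support, hi, hu]
    refine subset_span ⟨S.piecewise u 0, hsupp.le, ?_⟩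
    rw [cubeMatrix_row, hsupp]
    exact cubeIndicator_congr fun i hi => piecewise_eq_of_mem _ _ _ hi
  | insert j Z hjZ ih =>
    have hj : j ∈ S ∧ u j = 0 := by simpa using hZ.ge (mem_insert_self j Z)
    rw [cubeIndicator_eq_sub_sum hj.1 hj.2]
    refine sub_mem ?_ (sum_mem fun b hb => ih _ _ ?_)
    · refine span_mono (Set.image_mono fun y hy => ?_) (ih _ _ ?_)
      · exact hy.trans (erase_subset j S)
      · rw [filter_erase, hZ, erase_insert hjZ]
    · ext i
      rcases eq_or_ne i j with rfl | hij
      · simp [hjZ, (mem_erase.1 hb).1]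
      · simpa [hij] using congr(i ∈ $hZ)

theorem span_cubeIndicator_card_eq_span_cubeMatrix {t : ℕ} (ht : t ≤ Fintype.card ι) :
    span R (Set.range fun r : {S : Finset ι // #S = t} × (ι → α) => cubeIndicator R r.1.1 r.2) =
      span R (Set.range fun y : {y : ι → α // #(support y) ≤ t} => cubeMatrix R y.1) := by
  apply le_antisymm <;> rw [span_le]
  · rintro _ ⟨⟨⟨S, hS⟩, u⟩, rfl⟩
    refine span_mono ?_ (cubeIndicator_mem_span_cubeMatrix S u)
    rintro _ ⟨y, hy, rfl⟩
    exact ⟨⟨y, (card_le_card hy).trans hS.le⟩, rfl⟩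
  · rintro _ ⟨⟨y, hy⟩, rfl⟩
    obtain ⟨T, hyT, -, hT⟩ := exists_subsuperset_card_eq (subset_univ _) hy (by simpa using ht)
    dsimp only
    rw [SetLike.mem_coe, cubeMatrix_row]
    refine span_mono ?_ (cubeIndicator_mem_span_of_subset hyT y)
    rintro _ ⟨u, rfl⟩
    exact ⟨(⟨T, hT⟩, u), rfl⟩

theorem card_filter_support_eq (S : Finset ι) :
    #{y : ι → α | support y = S} = (Fintype.card α - 1) ^ #S := by
  have hpi : univ.filter (fun y : ι → α => support y = S) =
      Fintype.piFinset fun i => if i ∈ S then univ.erase 0 else {0} := by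
    ext y
    simp only [mem_filter, mem_univ, true_and, Fintype.mem_piFinset, support, Finset.ext_iff]
    refine forall_congr' fun i => ?_
    by_cases hi : i ∈ S <;> simp [hi]
  rw [hpi, Fintype.card_piFinset]
  simp [apply_ite card, card_erase_of_mem]

theorem card_filter_card_support_eq (i : ℕ) :
    #{y : ι → α | #(support y) = i} = (Fintype.card ι).choose i * (Fintype.card α - 1) ^ i := by
  rw [card_eq_sum_card_fiberwise (f := support) (t := powersetCard i univ)
    fun y hy => by simpa using hy]
  calc _ = ∑ S ∈ powersetCard i univ, (Fintype.card α - 1) ^ i := by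
        refine sum_congr rfl fun S hS => ?_
        rw [filter_filter, ← (mem_powersetCard.1 hS).2, ← card_filter_support_eq]
        exact congrArg card (filter_congr fun y _ => and_iff_right_of_imp fun h => by rw [h])
    _ = _ := by rw [sum_const, card_powersetCard, card_univ, smul_eq_mul]

theorem card_filter_card_support_le (t : ℕ) :
    #{y : ι → α | #(support y) ≤ t} =
      ∑ i ∈ range (t + 1), (Fintype.card ι).choose i * (Fintype.card α - 1) ^ i := by
  rw [card_eq_sum_card_fiberwise (f := fun y => #(support y)) (t := range (t + 1))
    fun y hy => by simpa [Nat.lt_succ_iff] using hy]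
  refine sum_congr rfl fun i hi => ?_
  rw [filter_filter, ← card_filter_card_support_eq]
  congr 1
  refine filter_congr fun y _ => and_iff_right_of_imp fun h => ?_
  rw [mem_range] at hi
  omega

theorem finrank_span_cubeMatrix_rows {K : Type*} [Field K] (t : ℕ) :
    Module.finrank K
        (span K (Set.range fun y : {y : ι → α // #(support y) ≤ t} => cubeMatrix K y.1)) =
      ∑ i ∈ range (t + 1), (Fintype.card ι).choose i * (Fintype.card α - 1) ^ i := by
  have hli : LinearIndependent K fun y : {y : ι → α // #(support y) ≤ t} => cubeMatrix K y.1 :=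
    (linearIndependent_rows_iff_isUnit.2 isUnit_cubeMatrix).comp _ Subtype.val_injective
  rw [finrank_span_eq_card hli, Fintype.card_subtype, card_filter_card_support_le]

end InclusionMatrix

open InclusionMatrix in
theorem inclusionMatrix_apply (v k t : ℕ) (r : {I : Finset (Fin k) // #I = t} × (Fin k → Fin v)) :
    inclusionMatrix v k t r = cubeIndicator ℝ r.1.1 r.2 := by
  ext x
  simp only [inclusionMatrix, cubeIndicator]
  -- not `rfl`: over `Fin k` the `Decidable` instance of `∀ i ∈ I, _` is a different one
  congr

open InclusionMatrix in
theorem rank_inclusionMatrix_general (v t k : ℕ) (hv : 1 ≤ v) (htk : t ≤ k) :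
    (inclusionMatrix v k t).rank =
      ∑ i ∈ Finset.range (t + 1), k.choose i * (v - 1) ^ i := by
  obtain ⟨n, rfl⟩ : ∃ n, v = n + 1 := ⟨v - 1, by omega⟩
  have hrows : (inclusionMatrix (n + 1) k t).row = fun r => cubeIndicator ℝ r.1.1 r.2 :=
    funext (inclusionMatrix_apply _ _ _)
  rw [Matrix.rank_eq_finrank_span_row, hrows,
    span_cubeIndicator_card_eq_span_cubeMatrix (by simpa using htk), finrank_span_cubeMatrix_rows]
  simp only [Fintype.card_fin, Nat.add_sub_cancel]

theorem rank_inclusionMatrix (v t k : ℕ) (hv : 1 ≤ v) (ht : 1 ≤ t) (htk : t ≤ k) :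
    (inclusionMatrix v k t).rank =
      ∑ i ∈ Finset.range (t + 1), k.choose i * (v - 1) ^ i :=
  rank_inclusionMatrix_general v t k hv htk
end

section
/- Let 1 ≤ t ≤ k and v ≥ 1, and let x ∈ V^k satisfy L_x ≤ t. Then there exists a row index (I,u) of the t-inclusion matrix M_t(v,k) such that the entry of M_t(v,k) in row (I,u) and column x equals 1, while the entry in row (I,u) and column y equals 0 for every y ∈ V^k with y ≺ x in the lexicographic order (i.e., the first 1 of that row lies in column x). -/
/-- `L x` is the number of coordinates of `x` that are nonzero. -/
def Lwt {v k : ℕ} (x : Fin k → Fin v) : ℕ :=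
  (Finset.univ.filter fun i => (x i : ℕ) ≠ 0).card

/-- Strict lexicographic order on `k`-tuples, comparing coordinates from the
first one. -/
def lexLT {v k : ℕ} (x y : Fin k → Fin v) : Prop :=
  ∃ i, (∀ j, j < i → x j = y j) ∧ x i < y i

section

variable {v k t : ℕ}

theorem exists_card_eq_support_subset_of_lwt_le {x : Fin k → Fin v} (hx : Lwt x ≤ t)
    (htk : t ≤ k) : ∃ I : Finset (Fin k), I.card = t ∧ ∀ i, (x i : ℕ) ≠ 0 → i ∈ I := by
  obtain ⟨I, hsupp, -, hI⟩ := Finset.exists_subsuperset_card_eq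
    (Finset.subset_univ (Finset.univ.filter fun i => (x i : ℕ) ≠ 0)) hx (by simpa using htk)
  exact ⟨I, hI, fun i hi => hsupp (Finset.mem_filter.2 ⟨Finset.mem_univ i, hi⟩)⟩

theorem lexLT.exists_ne_zero_and_ne {x y : Fin k → Fin v} (h : lexLT y x) :
    ∃ i, (x i : ℕ) ≠ 0 ∧ y i ≠ x i := by
  obtain ⟨i, -, hi⟩ := h
  exact ⟨i, Nat.ne_zero_of_lt (show (y i : ℕ) < x i from hi), hi.ne⟩

theorem inclusionMatrix_apply_self (I : {I : Finset (Fin k) // I.card = t}) (x : Fin k → Fin v) :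
    inclusionMatrix v k t (I, x) x = 1 :=
  if_pos fun _ _ => rfl

theorem inclusionMatrix_apply_eq_zero {r : {I : Finset (Fin k) // I.card = t} × (Fin k → Fin v)}
    {y : Fin k → Fin v} {i : Fin k} (hi : i ∈ r.1.1) (hne : y i ≠ r.2 i) :
    inclusionMatrix v k t r y = 0 :=
  if_neg fun h => hne (h i hi)

end

theorem exists_pivot_row_general (v t k : ℕ) (htk : t ≤ k)
    (x : Fin k → Fin v) (hx : Lwt x ≤ t) :
    ∃ r : {I : Finset (Fin k) // I.card = t} × (Fin k → Fin v),
      inclusionMatrix v k t r x = 1 ∧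
      ∀ y : Fin k → Fin v, lexLT y x → inclusionMatrix v k t r y = 0 := by
  obtain ⟨I, hI, hsupp⟩ := exists_card_eq_support_subset_of_lwt_le hx htk
  refine ⟨(⟨I, hI⟩, x), inclusionMatrix_apply_self _ x, fun y hyx => ?_⟩
  obtain ⟨i, hxi, hne⟩ := hyx.exists_ne_zero_and_ne
  exact inclusionMatrix_apply_eq_zero (hsupp i hxi) hne

theorem exists_pivot_row (v t k : ℕ) (hv : 1 ≤ v) (ht : 1 ≤ t) (htk : t ≤ k)
    (x : Fin k → Fin v) (hx : Lwt x ≤ t) :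
    ∃ r : {I : Finset (Fin k) // I.card = t} × (Fin k → Fin v),
      inclusionMatrix v k t r x = 1 ∧
      ∀ y : Fin k → Fin v, lexLT y x → inclusionMatrix v k t r y = 0 :=
  exists_pivot_row_general v t k htk x hx
end

section
/- For integers v ≥ 1 and 1 ≤ t ≤ k, the rank over ℝ of the t-inclusion matrix M_t(v,k) is at least ∑_{i=0}^{t} C(k,i)·(v−1)^i. -/
/-!
The columns indexed by the tuples of Hamming weight at most `t` are linearly independent; there
are `∑_{i ≤ t} C(k,i) (v-1)^i` of them. For such a tuple `x`, pick a `t`-set `I` containing its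
support. The column `x` has a `1` in row `(I, x)`, and any other column `y` with a `1` there
agrees with `x` on `I`, hence has strictly larger support. So these columns are triangular with
respect to the Hamming weight, with nonzero pivots.
-/

open Finset Matrix

theorem linearIndependent_of_pivot {ι ρ R α : Type*} [Ring R] [NoZeroDivisors R] [Fintype ι]
    [Preorder α] [WellFoundedLT α] (w : ι → ρ → R) (p : ι → ρ) (f : ι → α)
    (hpivot : ∀ i, w i (p i) ≠ 0) (hbelow : ∀ i j, j ≠ i → w j (p i) ≠ 0 → f j < f i) :
    LinearIndependent R w := by
  rw [Fintype.linearIndependent_iff]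
  intro g hg i
  induction hi : f i using WellFoundedLT.induction generalizing i with
  | _ a ih =>
    have hrow : ∑ j, g j * w j (p i) = g i * w i (p i) := by
      refine sum_eq_single i (fun j _ hji => ?_) (by simp)
      by_cases hw : w j (p i) = 0
      · rw [hw, mul_zero]
      · rw [ih _ (hi ▸ hbelow i j hji hw) j rfl, zero_mul]
    have := congrFun hg (p i)
    simp only [Finset.sum_apply, Pi.smul_apply, smul_eq_mul, Pi.zero_apply, hrow] at this
    exact (mul_eq_zero.mp this).resolve_right (hpivot i)

theorem Matrix.card_le_rank_of_linearIndependent_cols {m n n₀ R : Type*} [Field R] [Fintype m]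
    [Fintype n] [Fintype n₀] (A : Matrix m n R) (c : n₀ → n)
    (h : LinearIndependent R fun j i => A i (c j)) : Fintype.card n₀ ≤ A.rank :=
  calc Fintype.card n₀ = (A.submatrix id c)ᵀ.rank := h.rank_matrix.symm
    _ = (A.submatrix id c).rank := rank_transpose _
    _ ≤ A.rank := rank_submatrix_le _ _ _

section Hamming

variable {ι α : Type*} [Fintype ι] [DecidableEq α] [Zero α]

theorem hammingNorm_lt_of_eqOn {x y : ι → α} {I : Set ι} (hxI : Function.support x ⊆ I)
    (hyx : Set.EqOn y x I) (hne : y ≠ x) : hammingNorm x < hammingNorm y := by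
  have hsub : ({i | x i ≠ 0} : Finset ι) ⊆ ({i | y i ≠ 0} : Finset ι) := by
    intro i
    simp only [mem_filter, mem_univ, true_and]
    exact fun hi => hyx (hxI hi) ▸ hi
  refine card_lt_card ((ssubset_iff_of_subset hsub).mpr ?_)
  obtain ⟨i, hi⟩ := Function.ne_iff.mp hne
  have hx : x i = 0 := by_contra fun hx => hi (hyx (hxI hx))
  exact ⟨i, by simpa [hx] using hi, by simpa using hx⟩

variable [DecidableEq ι] [Fintype α]

theorem card_filter_support_eq (s : Finset ι) :
    #{x : ι → α | ({i | x i ≠ 0} : Finset ι) = s} = (Fintype.card α - 1) ^ #s := by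
  have e : {x : ι → α // ({i | x i ≠ 0} : Finset ι) = s} ≃ ∀ i, {a : α // a ≠ 0 ↔ i ∈ s} :=
    (Equiv.subtypeEquivRight fun x => by simp [Finset.ext_iff]).trans Equiv.subtypePiEquivPi
  have hfactor (i : ι) :
      Fintype.card {a : α // a ≠ 0 ↔ i ∈ s} = if i ∈ s then Fintype.card α - 1 else 1 := by
    by_cases hi : i ∈ s <;> simp [hi, Fintype.card_subtype_compl]
  rw [← Fintype.card_subtype, Fintype.card_congr e, Fintype.card_pi]
  simp_rw [hfactor, prod_ite_mem, univ_inter, prod_const]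

theorem card_filter_hammingNorm_eq (n : ℕ) :
    #{x : ι → α | hammingNorm x = n} = (Fintype.card ι).choose n * (Fintype.card α - 1) ^ n := by
  rw [card_eq_sum_card_fiberwise (f := fun x : ι → α => ({i | x i ≠ 0} : Finset ι))
    (t := powersetCard n univ) (fun x hx => by simpa [hammingNorm] using hx)]
  have hfiber : ∀ s ∈ powersetCard n (univ : Finset ι),
      #{x ∈ {x : ι → α | hammingNorm x = n} | ({i | x i ≠ 0} : Finset ι) = s} =
        (Fintype.card α - 1) ^ n := by
    intro s hs
    rw [mem_powersetCard_univ] at hs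
    rw [filter_filter, ← hs, ← card_filter_support_eq]
    congr 1
    exact filter_congr fun x _ => and_iff_right_of_imp fun h => by rw [hammingNorm, h]
  rw [sum_congr rfl hfiber, sum_const, card_powersetCard, card_univ, smul_eq_mul]

theorem card_filter_hammingNorm_le (t : ℕ) :
    #{x : ι → α | hammingNorm x ≤ t} =
      ∑ n ∈ range (t + 1), (Fintype.card ι).choose n * (Fintype.card α - 1) ^ n := by
  rw [card_eq_sum_card_fiberwise (f := hammingNorm) (t := range (t + 1))
    (fun x hx => by simpa [Nat.lt_succ_iff] using hx)]
  refine sum_congr rfl fun n hn => ?_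
  rw [← card_filter_hammingNorm_eq, filter_filter]
  congr 1
  exact filter_congr fun x _ => and_iff_right_of_imp fun h => by
    rw [h]; exact Nat.lt_succ_iff.mp (mem_range.mp hn)

end Hamming

theorem rank_inclusionMatrix_ge_general (v t k : ℕ) (hv : 1 ≤ v) (htk : t ≤ k) :
    ∑ i ∈ Finset.range (t + 1), k.choose i * (v - 1) ^ i ≤
      (inclusionMatrix v k t).rank := by
  have : NeZero v := ⟨by omega⟩
  have hcover (x : Fin k → Fin v) (hx : hammingNorm x ≤ t) :
      ∃ I : {I : Finset (Fin k) // I.card = t}, Function.support x ⊆ I.1 := by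
    obtain ⟨I, hxI, hI⟩ := exists_superset_card_eq hx (by simpa using htk)
    exact ⟨⟨I, hI⟩, fun i hi => hxI (by simpa using hi)⟩
  choose I hI using hcover
  have hli : LinearIndependent ℝ fun (x : {x : Fin k → Fin v // hammingNorm x ≤ t}) r =>
      inclusionMatrix v k t r x := by
    refine linearIndependent_of_pivot _ (fun x => (I x.1 x.2, x.1))
      (fun x => t - hammingNorm x.1) (fun x => by simp [inclusionMatrix]) fun x y hyx hy => ?_
    have hlt := hammingNorm_lt_of_eqOn (hI x.1 x.2)
      (by simpa [inclusionMatrix, Set.EqOn] using hy) (Subtype.coe_ne_coe.mpr hyx)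
    have hyt := y.2
    omega
  calc _ = Fintype.card {x : Fin k → Fin v // hammingNorm x ≤ t} := by
        rw [Fintype.card_subtype, card_filter_hammingNorm_le]; simp
    _ ≤ _ := card_le_rank_of_linearIndependent_cols _ _ hli

theorem rank_inclusionMatrix_ge (v t k : ℕ) (hv : 1 ≤ v) (ht : 1 ≤ t) (htk : t ≤ k) :
    ∑ i ∈ Finset.range (t + 1), k.choose i * (v - 1) ^ i ≤
      (inclusionMatrix v k t).rank :=
  rank_inclusionMatrix_ge_general v t k hv htk
end

section
/- Let 1 ≤ t ≤ k, v ≥ 1, and let x ∈ V^k satisfy L_x > t. Denoting by C_y the column of the t-inclusion matrix M_t(v,k) indexed by y, we have ∑_{y ∈ F_x} (−1)^{L_y} C_y = 0 (the zero vector). -/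
/-- `F x` as a finset: the tuples each of whose coordinates is either `0` or
the corresponding coordinate of `x`. -/
def Fset {v k : ℕ} (x : Fin k → Fin v) : Finset (Fin k → Fin v) :=
  Finset.univ.filter fun z => ∀ i, (z i : ℕ) = 0 ∨ z i = x i

open Finset Function

section Toggle

variable {v k : ℕ} [NeZero v]

lemma mem_Fset_iff {x y : Fin k → Fin v} : y ∈ Fset x ↔ ∀ i, y i = 0 ∨ y i = x i := by
  simp [Fset, Fin.val_eq_zero_iff]

lemma Lwt_eq_card (y : Fin k → Fin v) : Lwt y = #{i | y i ≠ 0} := by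
  simp [Lwt, Fin.val_eq_zero_iff]

lemma Lwt_update_of_eq_zero {y : Fin k → Fin v} {j : Fin k} {c : Fin v} (hy : y j = 0)
    (hc : c ≠ 0) : Lwt (update y j c) = Lwt y + 1 := by
  have hfilter : univ.filter (update y j c · ≠ 0) = insert j (univ.filter (y · ≠ 0)) := by
    ext i
    by_cases hij : i = j <;> simp [update_apply, hij, hc]
  rw [Lwt_eq_card, Lwt_eq_card, hfilter, card_insert_of_notMem (by simp [hy])]

lemma neg_one_pow_Lwt_update {y : Fin k → Fin v} {j : Fin k} {c : Fin v}
    (h : y j = 0 ∧ c ≠ 0 ∨ y j ≠ 0 ∧ c = 0) :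
    (-1 : ℝ) ^ Lwt (update y j c) = -(-1) ^ Lwt y := by
  rcases h with ⟨hy, hc⟩ | ⟨hy, rfl⟩
  · rw [Lwt_update_of_eq_zero hy hc, pow_succ, mul_neg_one]
  · -- `y` is obtained back from `update y j 0` by re-inserting the nonzero value `y j`
    have hLwt := Lwt_update_of_eq_zero (y := update y j 0) (update_self j 0 y) hy
    rw [update_idem, update_eq_self] at hLwt
    rw [hLwt, pow_succ, mul_neg_one, neg_neg]

def toggle (x : Fin k → Fin v) (j : Fin k) (y : Fin k → Fin v) : Fin k → Fin v :=
  update y j (if y j = 0 then x j else 0)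

variable {x y : Fin k → Fin v} {j : Fin k}

lemma toggle_ne (hxj : x j ≠ 0) : toggle x j y ≠ y := fun h => by
  have hj := congrFun h j
  by_cases hy : y j = 0 <;> simp_all [toggle]

lemma toggle_mem_Fset (hy : y ∈ Fset x) : toggle x j y ∈ Fset x := by
  rw [mem_Fset_iff] at hy ⊢
  intro i
  by_cases hij : i = j
  · subst hij
    by_cases h0 : y i = 0 <;> simp [toggle, h0]
  · simpa [toggle, hij] using hy i

lemma toggle_toggle (hxj : x j ≠ 0) (hy : y ∈ Fset x) : toggle x j (toggle x j y) = y := by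
  ext1 i
  by_cases hij : i = j
  · subst hij
    rcases mem_Fset_iff.mp hy i with h0 | h0 <;> simp [toggle, h0, hxj]
  · simp [toggle, hij]

lemma neg_one_pow_Lwt_toggle (hxj : x j ≠ 0) :
    (-1 : ℝ) ^ Lwt (toggle x j y) = -(-1) ^ Lwt y :=
  neg_one_pow_Lwt_update <| by by_cases hy : y j = 0 <;> simp [hy, hxj]

theorem sum_Fset_neg_one_pow_Lwt_mul_eq_zero (f : (Fin k → Fin v) → ℝ) (hxj : x j ≠ 0)
    (hf : ∀ y c, f (update y j c) = f y) :
    ∑ y ∈ Fset x, (-1 : ℝ) ^ Lwt y * f y = 0 :=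
  sum_involution (fun y _ => toggle x j y)
    (fun y _ => by rw [neg_one_pow_Lwt_toggle hxj, toggle, hf]; ring)
    (fun _ _ _ => toggle_ne hxj) (fun _ => toggle_mem_Fset) (fun _ => toggle_toggle hxj)

end Toggle

lemma exists_val_ne_zero_notMem {v k : ℕ} (x : Fin k → Fin v) (I : Finset (Fin k))
    (hI : #I < Lwt x) : ∃ j, (x j : ℕ) ≠ 0 ∧ j ∉ I := by
  obtain ⟨j, hj, hjI⟩ := exists_mem_notMem_of_card_lt_card hI
  exact ⟨j, (mem_filter.mp hj).2, hjI⟩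

lemma inclusionMatrix_update_of_notMem {v k t : ℕ}
    (r : {I : Finset (Fin k) // I.card = t} × (Fin k → Fin v)) {j : Fin k} (hj : j ∉ r.1.1)
    (y : Fin k → Fin v) (c : Fin v) :
    inclusionMatrix v k t r (update y j c) = inclusionMatrix v k t r y := by
  have hagree : ∀ i ∈ r.1.1, update y j c i = y i := fun i hi =>
    update_of_ne (ne_of_mem_of_not_mem hi hj) c y
  simp only [inclusionMatrix]
  exact if_congr (forall₂_congr fun i hi => by rw [hagree i hi]) rfl rfl

theorem alternating_sum_columns_eq_zero_general (v t k : ℕ) (x : Fin k → Fin v) (hx : t < Lwt x) :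
    ∑ y ∈ Fset x, ((-1 : ℝ) ^ Lwt y) • (fun r => inclusionMatrix v k t r y) =
      (0 : ({I : Finset (Fin k) // I.card = t} × (Fin k → Fin v)) → ℝ) := by
  funext r
  obtain ⟨j, hxj, hjI⟩ := exists_val_ne_zero_notMem x r.1.1 (r.1.2.symm ▸ hx)
  have : NeZero v := ⟨(x j).pos.ne'⟩
  simp only [Finset.sum_apply, Pi.smul_apply, Pi.zero_apply, smul_eq_mul]
  exact sum_Fset_neg_one_pow_Lwt_mul_eq_zero _ (by simpa [Fin.val_eq_zero_iff] using hxj)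
    (inclusionMatrix_update_of_notMem r hjI)

theorem alternating_sum_columns_eq_zero (v t k : ℕ) (hv : 1 ≤ v) (ht : 1 ≤ t)
    (htk : t ≤ k) (x : Fin k → Fin v) (hx : t < Lwt x) :
    ∑ y ∈ Fset x, ((-1 : ℝ) ^ Lwt y) • (fun r => inclusionMatrix v k t r y) =
      (0 : ({I : Finset (Fin k) // I.card = t} × (Fin k → Fin v)) → ℝ) :=
  alternating_sum_columns_eq_zero_general v t k x hx
end

section
/- For integers v ≥ 1 and t ≥ 1, the null space of the t-inclusion matrix M_t(v,t+1), viewed as a linear map from ℝ^(V^(t+1)) (vectors indexed by (t+1)-tuples over V) to ℝ^(rows), has dimension (v−1)^(t+1). -/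
open Finset Function

def prodDeltaSub {ι α : Type*} [Fintype ι] [DecidableEq α] (a₀ : α) (b : ι → α) :
    (ι → α) → ℝ :=
  fun x => ∏ j, ((if x j = b j then 1 else 0) - if x j = a₀ then 1 else 0)

theorem prodDeltaSub_apply_of_ne {ι α : Type*} [Fintype ι] [DecidableEq α] {a₀ : α}
    {x : ι → α} (hx : ∀ j, x j ≠ a₀) (b : ι → α) :
    prodDeltaSub a₀ b x = if x = b then 1 else 0 := by
  simp [prodDeltaSub, hx, Fintype.prod_boole, funext_iff]

section LineSums

variable (ι α : Type*) [DecidableEq ι] [Fintype α]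

def lineSumZero : Submodule ℝ ((ι → α) → ℝ) where
  carrier := {f | ∀ j y, ∑ c, f (update y j c) = 0}
  add_mem' {f g} hf hg j y := by simp [sum_add_distrib, hf j y, hg j y]
  zero_mem' _ _ := by simp
  smul_mem' r f hf j y := by simp [← mul_sum, hf j y]

variable {ι α} [Fintype ι]

theorem sum_prod_update {R : Type*} [CommSemiring R] (F : ι → α → R) (x : ι → α) (j : ι) :
    ∑ c, ∏ i, F i (update x j c i) = (∑ c, F j c) * ∏ i ∈ univ \ {j}, F i (x i) := by
  simp only [apply_update F, prod_update_of_mem (mem_univ j), sum_mul]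

theorem eq_zero_of_mem_lineSumZero {f : (ι → α) → ℝ} (hf : f ∈ lineSumZero ι α) (a₀ : α)
    (h : ∀ x : ι → α, (∀ j, x j ≠ a₀) → f x = 0) : f = 0 := by
  suffices ∀ s : Finset ι, ∀ x, (∀ j, x j = a₀ → j ∈ s) → f x = 0 from
    funext fun x => this univ x fun j _ => mem_univ j
  intro s
  induction s using Finset.induction_on with
  | empty => exact fun x hx => h x fun j hj => notMem_empty j (hx j hj)
  | insert j s _ ih =>
    intro x hx
    by_cases hxj : x j = a₀
    · have hline := hf j x
      rwa [sum_eq_single_of_mem a₀ (mem_univ a₀), ← hxj, update_eq_self] at hline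
      intro c _ hc
      refine ih _ fun i hi => ?_
      rcases eq_or_ne i j with rfl | hij
      · exact absurd (by simpa using hi) hc
      · rw [update_of_ne hij] at hi
        exact (mem_insert.1 (hx i hi)).resolve_left hij
    · refine ih x fun i hi => ?_
      obtain rfl | hs := mem_insert.1 (hx i hi)
      · exact absurd hi hxj
      · exact hs

variable (a₀ : α)

def restrictAwayFrom : lineSumZero ι α →ₗ[ℝ] (ι → {a // a ≠ a₀}) → ℝ :=
  (LinearMap.funLeft ℝ ℝ fun b j => (b j : α)).comp (lineSumZero ι α).subtype

theorem restrictAwayFrom_injective : Injective (restrictAwayFrom (ι := ι) a₀) := by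
  rw [← LinearMap.ker_eq_bot, LinearMap.ker_eq_bot']
  intro f hf
  ext1
  exact eq_zero_of_mem_lineSumZero f.2 a₀ fun x hx => congrFun hf fun j => ⟨x j, hx j⟩

variable [DecidableEq α]

theorem prodDeltaSub_mem_lineSumZero (b : ι → α) : prodDeltaSub a₀ b ∈ lineSumZero ι α := by
  intro j y
  simp only [prodDeltaSub]
  rw [sum_prod_update fun i a => (if a = b i then 1 else 0) - if a = a₀ then 1 else 0]
  simp

theorem restrictAwayFrom_surjective : Surjective (restrictAwayFrom (ι := ι) a₀) := by
  intro g
  refine ⟨⟨∑ b, g b • prodDeltaSub a₀ fun j => (b j : α),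
    sum_mem fun b _ => Submodule.smul_mem _ _ (prodDeltaSub_mem_lineSumZero _ _)⟩, ?_⟩
  funext a
  have hval : ∀ b, ((fun j => (a j : α)) = fun j => (b j : α)) ↔ a = b := fun _ =>
    Subtype.val_injective.comp_left.eq_iff
  simp [restrictAwayFrom, prodDeltaSub_apply_of_ne (fun j => (a j).2), hval]

theorem finrank_lineSumZero [Nonempty α] :
    Module.finrank ℝ (lineSumZero ι α) = (Fintype.card α - 1) ^ Fintype.card ι := by
  obtain ⟨a₀⟩ := ‹Nonempty α›
  rw [(LinearEquiv.ofBijective _ ⟨restrictAwayFrom_injective a₀,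
    restrictAwayFrom_surjective a₀⟩).finrank_eq, Module.finrank_fintype_fun_eq_card,
    Fintype.card_fun, Fintype.card_subtype_compl, Fintype.card_subtype_eq]

end LineSums

theorem inclusionMatrix_mulVec_compl_singleton {v k t : ℕ} (f : (Fin k → Fin v) → ℝ)
    (j : Fin k) (hj : ({j}ᶜ : Finset (Fin k)).card = t) (u : Fin k → Fin v) :
    (inclusionMatrix v k t).mulVec f (⟨{j}ᶜ, hj⟩, u) = ∑ c, f (update u j c) := by
  have hfiber : ∀ x : Fin k → Fin v,
      ∑ c, (if update u j c = x then f x else 0) = if ∀ i ≠ j, x i = u i then f x else 0 := by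
    intro x
    simp only [update_eq_iff, ite_and]
    rw [sum_ite_eq']
    simp [eq_comm]
  calc _ = ∑ x, if ∀ i ≠ j, x i = u i then f x else 0 := by
        simp [Matrix.mulVec, dotProduct, inclusionMatrix, ite_mul]
    _ = ∑ x, ∑ c, if update u j c = x then f x else 0 := by simp only [hfiber]
    _ = ∑ c, f (update u j c) := by rw [sum_comm]; simp

theorem Finset.exists_eq_compl_singleton_of_card_eq {n : ℕ} {I : Finset (Fin (n + 1))}
    (hI : I.card = n) : ∃ j, I = {j}ᶜ := by
  obtain ⟨j, hj⟩ := card_eq_one.1 (by simp [card_compl, hI] : Iᶜ.card = 1)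
  exact ⟨j, by rw [← hj, compl_compl]⟩

theorem ker_mulVecLin_inclusionMatrix (v t : ℕ) :
    LinearMap.ker (inclusionMatrix v (t + 1) t).mulVecLin =
      lineSumZero (Fin (t + 1)) (Fin v) := by
  ext f
  rw [LinearMap.mem_ker, Matrix.mulVecLin_apply]
  constructor
  · intro hf j y
    have hj : ({j}ᶜ : Finset (Fin (t + 1))).card = t := by simp [card_compl]
    rw [← inclusionMatrix_mulVec_compl_singleton f j hj, hf, Pi.zero_apply]
  · intro hf
    funext ⟨⟨I, hI⟩, u⟩
    obtain ⟨j, rfl⟩ := exists_eq_compl_singleton_of_card_eq hI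
    exact (inclusionMatrix_mulVec_compl_singleton f j hI u).trans (hf j u)

theorem nullity_inclusionMatrix_general (v t : ℕ) (hv : 1 ≤ v) :
    Module.finrank ℝ
        (LinearMap.ker (inclusionMatrix v (t + 1) t).mulVecLin) =
      (v - 1) ^ (t + 1) := by
  have : Nonempty (Fin v) := ⟨⟨0, hv⟩⟩
  rw [ker_mulVecLin_inclusionMatrix, finrank_lineSumZero, Fintype.card_fin, Fintype.card_fin]

theorem nullity_inclusionMatrix (v t : ℕ) (hv : 1 ≤ v) (ht : 1 ≤ t) :
    Module.finrank ℝ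
        (LinearMap.ker (inclusionMatrix v (t + 1) t).mulVecLin) =
      (v - 1) ^ (t + 1) :=
  nullity_inclusionMatrix_general v t hv
end

section
/- Let v ≥ 2. The family of (v−1)³ vectors {T_{ijk} : 1 ≤ i,j,k ≤ v−1}, where T_{ijk}(a,b,c) = (δ_{a,0} − δ_{a,i})·(δ_{b,0} − δ_{b,j})·(δ_{c,0} − δ_{c,k}), forms a basis over ℝ of the null space of the 2-inclusion matrix M_2(v,3). -/
/-- Kronecker delta `δ_{a,b}` on `Fin v`, valued in `ℝ`. -/
def kdel {v : ℕ} (a b : Fin v) : ℝ := if a = b then 1 else 0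

/-- Kronecker delta `δ_{a,0}` on `Fin v`, valued in `ℝ`. -/
def kdel0 {v : ℕ} (a : Fin v) : ℝ := if (a : ℕ) = 0 then 1 else 0

/-- The intercalate vector `T_{ijk}`, indexed by triples `(a,b,c) ∈ V³`
(encoded as `x : Fin 3 → Fin v`):
`T_{ijk}(a,b,c) = (δ_{a,0} − δ_{a,i})·(δ_{b,0} − δ_{b,j})·(δ_{c,0} − δ_{c,k})`. -/
def interT {v : ℕ} (i j k : Fin v) : (Fin 3 → Fin v) → ℝ :=
  fun x =>
    (kdel0 (x 0) - kdel (x 0) i) * (kdel0 (x 1) - kdel (x 1) j) *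
      (kdel0 (x 2) - kdel (x 2) k)

/-!
Write `e_t = δ_0 − δ_t`, so that `T_{ijk} = e_i ⊗ e_j ⊗ e_k`. Every 2-subset of `Fin 3` is the
complement of a point, so a row `(I, u)` of `M_2(v,3)` sums a function along the line through `u`
in the remaining direction: the null space consists of the functions all of whose line sums vanish.
Each `T_{ijk}` is such a function because `∑_a e_t(a) = 0`. Conversely, `∑_t g(t) e_t = -g` whenever
`∑ g = 0`; applying this in each of the three coordinates gives `f = -∑_{i,j,k} f(i,j,k) T_{ijk}`
for `f` in the null space, and the terms with an index `0` vanish since `e_0 = 0`. Independence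
holds because `T_{ijk}(a,b,c) = -δ_{(i,j,k),(a,b,c)}` when `a, b, c` are all nonzero.
-/

open Finset Function
open scoped Matrix

section

variable {v : ℕ}

lemma sum_prod_update_eq_zero {k : ℕ} (g : Fin k → Fin v → ℝ) (u : Fin k → Fin v) (m : Fin k)
    (hg : ∑ c, g m c = 0) : ∑ c, ∏ n, g n (update u m c n) = 0 := by
  have hprod (c : Fin v) : ∏ n, g n (update u m c n) = g m c * ∏ n ∈ {m}ᶜ, g n (u n) := by
    rw [Fintype.prod_eq_mul_prod_compl m, update_self]
    congr 1
    exact prod_congr rfl fun n hn => by rw [update_of_ne (by simpa using hn)]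
  simp_rw [hprod, ← sum_mul, hg, zero_mul]

lemma card_eq_iff_eq_compl_singleton {k t : ℕ} (hkt : t + 1 = k) (I : Finset (Fin k)) :
    #I = t ↔ ∃ m, I = {m}ᶜ := by
  have hcompl : #I = t ↔ #Iᶜ = 1 := by
    have := card_le_univ I
    rw [card_compl, Fintype.card_fin] at *
    omega
  rw [hcompl, card_eq_one]
  exact exists_congr fun m => compl_eq_comm.trans eq_comm

lemma inclusionMatrix_mulVec_apply_of_eq_compl {k t : ℕ} (f : (Fin k → Fin v) → ℝ)
    {I : {I : Finset (Fin k) // #I = t}} (u : Fin k → Fin v) (m : Fin k) (hI : I.1 = {m}ᶜ) :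
    (inclusionMatrix v k t *ᵥ f) (I, u) = ∑ c, f (update u m c) := by
  have hline : ({x | ∀ i ∈ I.1, x i = u i} : Finset (Fin k → Fin v)) = univ.image (update u m) := by
    ext x
    simp only [hI, mem_compl, mem_singleton, mem_filter, mem_univ, true_and, mem_image]
    constructor
    · intro hx
      refine ⟨x m, funext fun n => ?_⟩
      by_cases hn : n = m
      · subst hn; simp
      · rw [update_of_ne hn, hx n hn]
    · rintro ⟨c, rfl⟩ n hn
      exact update_of_ne hn _ _
  simp only [Matrix.mulVec, dotProduct, inclusionMatrix, ite_mul, one_mul, zero_mul]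
  rw [← sum_filter, hline, sum_image fun _ _ _ _ h => update_injective u m h]

lemma mem_ker_inclusionMatrix_iff {k t : ℕ} (hkt : t + 1 = k) (f : (Fin k → Fin v) → ℝ) :
    f ∈ LinearMap.ker (inclusionMatrix v k t).mulVecLin ↔
      ∀ u m, ∑ c, f (update u m c) = 0 := by
  rw [LinearMap.mem_ker, Matrix.mulVecLin_apply, funext_iff]
  constructor
  · intro h u m
    rw [← inclusionMatrix_mulVec_apply_of_eq_compl f
      (I := ⟨{m}ᶜ, (card_eq_iff_eq_compl_singleton hkt _).2 ⟨m, rfl⟩⟩) u m rfl]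
    exact h _
  · rintro h ⟨I, u⟩
    obtain ⟨m, hm⟩ := (card_eq_iff_eq_compl_singleton hkt I.1).1 I.2
    rw [inclusionMatrix_mulVec_apply_of_eq_compl f u m hm]
    exact h u m

def kdelDiff (t : Fin v) : Fin v → ℝ := fun a => kdel0 a - kdel a t

lemma interT_apply (i j k : Fin v) (x : Fin 3 → Fin v) :
    interT i j k x = kdelDiff i (x 0) * kdelDiff j (x 1) * kdelDiff k (x 2) := rfl

lemma interT_eq_prod (i j k : Fin v) (x : Fin 3 → Fin v) :
    interT i j k x = ∏ n, kdelDiff (![i, j, k] n) (x n) := by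
  rw [Fin.prod_univ_three]; rfl

lemma kdelDiff_of_val_eq_zero {t : Fin v} (ht : (t : ℕ) = 0) : kdelDiff t = 0 := by
  ext a
  simp [kdelDiff, kdel, kdel0, Fin.ext_iff, ht]

lemma kdelDiff_of_val_ne_zero (t : Fin v) {a : Fin v} (ha : (a : ℕ) ≠ 0) :
    kdelDiff t a = -kdel a t := by
  simp [kdelDiff, kdel0, ha]

lemma sum_kdel0 (t : Fin v) : ∑ a : Fin v, kdel0 a = 1 := by
  rw [Fintype.sum_eq_single (f := kdel0) ⟨0, t.pos⟩ fun a ha => if_neg fun h => ha (Fin.ext h)]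
  simp [kdel0]

lemma sum_kdelDiff (t : Fin v) : ∑ a, kdelDiff t a = 0 := by
  simp [kdelDiff, kdel, sum_sub_distrib, sum_kdel0 t]

lemma sum_mul_kdelDiff {g : Fin v → ℝ} (hg : ∑ t, g t = 0) (a : Fin v) :
    ∑ t, g t * kdelDiff t a = -g a := by
  simp [kdelDiff, mul_sub, sum_sub_distrib, ← sum_mul, hg, kdel]

lemma interT_mem_ker (i j k : Fin v) :
    interT i j k ∈ LinearMap.ker (inclusionMatrix v 3 2).mulVecLin := by
  rw [mem_ker_inclusionMatrix_iff rfl]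
  intro u m
  simp_rw [interT_eq_prod]
  exact sum_prod_update_eq_zero _ u m (sum_kdelDiff _)

abbrev NonzeroTriple (v : ℕ) : Type :=
  {i : Fin v // (i : ℕ) ≠ 0} × {j : Fin v // (j : ℕ) ≠ 0} × {k : Fin v // (k : ℕ) ≠ 0}

def NonzeroTriple.toFun (p : NonzeroTriple v) : Fin 3 → Fin v := ![p.1.1, p.2.1.1, p.2.2.1]

def intercalate (p : NonzeroTriple v) : (Fin 3 → Fin v) → ℝ := interT p.1.1 p.2.1.1 p.2.2.1

lemma intercalate_apply_toFun (p q : NonzeroTriple v) :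
    intercalate p q.toFun = -(Pi.single p 1 : NonzeroTriple v → ℝ) q := by
  obtain ⟨⟨a, ha⟩, ⟨b, hb⟩, ⟨c, hc⟩⟩ := q
  obtain ⟨⟨i, -⟩, ⟨j, -⟩, ⟨k, -⟩⟩ := p
  simp [intercalate, NonzeroTriple.toFun, interT_apply, kdelDiff_of_val_ne_zero, ha, hb, hc,
    Pi.single_apply, kdel]
  split_ifs <;> simp_all

lemma linearIndependent_intercalate : LinearIndependent ℝ (intercalate (v := v)) := by
  refine LinearIndependent.of_comp (LinearMap.funLeft ℝ ℝ NonzeroTriple.toFun) ?_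
  have : LinearMap.funLeft ℝ ℝ NonzeroTriple.toFun ∘ intercalate =
      -⇑(Pi.basisFun ℝ (NonzeroTriple v)) := by
    ext p q
    simp [LinearMap.funLeft_apply, intercalate_apply_toFun]
  rw [this]
  exact (Pi.basisFun ℝ _).linearIndependent.neg

lemma sum_mul_interT_of_lineSums (F : Fin v → Fin v → Fin v → ℝ)
    (h₂ : ∀ a b, ∑ c, F a b c = 0) (h₁ : ∀ a c, ∑ b, F a b c = 0)
    (h₀ : ∀ b c, ∑ a, F a b c = 0) (x : Fin 3 → Fin v) :
    ∑ i, ∑ j, ∑ k, F i j k * interT i j k x = -F (x 0) (x 1) (x 2) := by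
  calc ∑ i, ∑ j, ∑ k, F i j k * interT i j k x
      = ∑ i, ∑ j, kdelDiff i (x 0) * kdelDiff j (x 1) * ∑ k, F i j k * kdelDiff k (x 2) := by
        refine sum_congr rfl fun i _ => sum_congr rfl fun j _ => ?_
        rw [mul_sum]
        exact sum_congr rfl fun k _ => by rw [interT_apply]; ring
    _ = -∑ i, kdelDiff i (x 0) * ∑ j, F i j (x 2) * kdelDiff j (x 1) := by
        rw [← sum_neg_distrib]
        refine sum_congr rfl fun i _ => ?_
        rw [mul_sum, ← sum_neg_distrib]
        exact sum_congr rfl fun j _ => by rw [sum_mul_kdelDiff (h₂ i j)]; ring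
    _ = ∑ i, F i (x 1) (x 2) * kdelDiff i (x 0) := by
        rw [← sum_neg_distrib]
        exact sum_congr rfl fun i _ => by rw [sum_mul_kdelDiff (h₁ i (x 2))]; ring
    _ = -F (x 0) (x 1) (x 2) := sum_mul_kdelDiff (h₀ _ _) _

lemma eq_neg_sum_smul_interT_of_mem_ker {f : (Fin 3 → Fin v) → ℝ}
    (hf : f ∈ LinearMap.ker (inclusionMatrix v 3 2).mulVecLin) :
    f = -∑ i, ∑ j, ∑ k, f ![i, j, k] • interT i j k := by
  rw [mem_ker_inclusionMatrix_iff rfl] at hf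
  have h₂ (a b : Fin v) : ∑ c, f ![a, b, c] = 0 := by
    convert hf ![a, b, a] 2 using 3 with c
    ext n; fin_cases n <;> rfl
  have h₁ (a c : Fin v) : ∑ b, f ![a, b, c] = 0 := by
    convert hf ![a, a, c] 1 using 3 with b
    ext n; fin_cases n <;> rfl
  have h₀ (b c : Fin v) : ∑ a, f ![a, b, c] = 0 := by
    convert hf ![b, b, c] 0 using 3 with a
    ext n; fin_cases n <;> rfl
  ext x
  simp only [Pi.neg_apply, Finset.sum_apply, Pi.smul_apply, smul_eq_mul]
  rw [sum_mul_interT_of_lineSums (fun a b c => f ![a, b, c]) h₂ h₁ h₀, neg_neg]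
  congr 1
  ext n; fin_cases n <;> rfl

lemma interT_mem_span_intercalate (i j k : Fin v) :
    interT i j k ∈ Submodule.span ℝ (Set.range (intercalate (v := v))) := by
  by_cases h : (i : ℕ) = 0 ∨ (j : ℕ) = 0 ∨ (k : ℕ) = 0
  · have : interT i j k = 0 := by
      ext x
      rcases h with h | h | h <;> simp [interT_apply, kdelDiff_of_val_eq_zero h]
    rw [this]
    exact zero_mem _
  · rw [not_or, not_or] at h
    exact Submodule.subset_span ⟨(⟨i, h.1⟩, ⟨j, h.2.1⟩, ⟨k, h.2.2⟩), rfl⟩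

end

theorem intercalates_basis_nullspace_general (v : ℕ) :
    LinearIndependent ℝ
        (fun p : {i : Fin v // (i : ℕ) ≠ 0} × {j : Fin v // (j : ℕ) ≠ 0} ×
            {k : Fin v // (k : ℕ) ≠ 0} =>
          interT p.1.1 p.2.1.1 p.2.2.1) ∧
      Submodule.span ℝ
          (Set.range
            (fun p : {i : Fin v // (i : ℕ) ≠ 0} × {j : Fin v // (j : ℕ) ≠ 0} ×
                {k : Fin v // (k : ℕ) ≠ 0} =>
              interT p.1.1 p.2.1.1 p.2.2.1)) =
        LinearMap.ker (inclusionMatrix v 3 2).mulVecLin := by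
  refine ⟨linearIndependent_intercalate, le_antisymm ?_ fun f hf => ?_⟩
  · rw [Submodule.span_le]
    rintro _ ⟨p, rfl⟩
    exact interT_mem_ker _ _ _
  · rw [eq_neg_sum_smul_interT_of_mem_ker hf]
    exact neg_mem <| sum_mem fun i _ => sum_mem fun j _ => sum_mem fun k _ =>
      Submodule.smul_mem _ _ (interT_mem_span_intercalate i j k)

/-- The family `{T_{ijk} : 1 ≤ i,j,k ≤ v−1}` is a basis of the null space of
`M_2(v,3)`: it is linearly independent and spans the null space. -/
theorem intercalates_basis_nullspace (v : ℕ) (hv : 2 ≤ v) :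
    LinearIndependent ℝ
        (fun p : {i : Fin v // (i : ℕ) ≠ 0} × {j : Fin v // (j : ℕ) ≠ 0} ×
            {k : Fin v // (k : ℕ) ≠ 0} =>
          interT p.1.1 p.2.1.1 p.2.2.1) ∧
      Submodule.span ℝ
          (Set.range
            (fun p : {i : Fin v // (i : ℕ) ≠ 0} × {j : Fin v // (j : ℕ) ≠ 0} ×
                {k : Fin v // (k : ℕ) ≠ 0} =>
              interT p.1.1 p.2.1.1 p.2.2.1)) =
        LinearMap.ker (inclusionMatrix v 3 2).mulVecLin :=
  intercalates_basis_nullspace_general v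
end

section
/- Let v ≥ 1 and let P, Q ⊆ V³ be finite sets of triples (i,j;s) (row, column, symbol) such that: (1) P and Q occupy the same set of cells, i.e., {(i,j) : ∃s, (i,j,s) ∈ P} = {(i,j) : ∃s, (i,j,s) ∈ Q}, and each of P and Q contains at most one symbol per cell; (2) for every cell (i,j) occupied by both, the symbol of P at (i,j) differs from the symbol of Q at (i,j); (3) for every row r, the set of symbols occurring in row r of P equals the set of symbols occurring in row r of Q, and each symbol occurs at most once in each row of P and of Q; (4) the same holds for every column. Then the signed frequency vector T ∈ ℝ^(V³) defined by T(i,j,s) = 1 if (i,j,s) ∈ P, T(i,j,s) = −1 if (i,j,s) ∈ Q, and T(i,j,s) = 0 otherwise, satisfies M_2(v,3) · T = 0. -/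
open Finset Matrix

namespace Finset

variable {α β : Type*} [DecidableEq β] {P Q : Finset α} {f : α → β}

theorem card_filter_eq_of_injOn_of_image_eq (hP : Set.InjOn f P) (hQ : Set.InjOn f Q)
    (h : P.image f = Q.image f) (b : β) : #{a ∈ P | f a = b} = #{a ∈ Q | f a = b} := by
  have fibre : ∀ S : Finset α, Set.InjOn f S →
      #{a ∈ S | f a = b} = #{c ∈ S.image f | c = b} :=
    fun S hS => by rw [filter_image, card_image_of_injOn (hS.mono (filter_subset _ _))]
  rw [fibre P hP, fibre Q hQ, h]

end Finset

section

variable {α β : Type*} [DecidableEq α]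

def signedIndicator (P Q : Finset α) (a : α) : ℝ :=
  if a ∈ P then 1 else if a ∈ Q then -1 else 0

variable [Fintype α] {P Q : Finset α}

theorem sum_boole_mul_signedIndicator (hPQ : Disjoint P Q) (p : α → Prop) [DecidablePred p] :
    ∑ a, (if p a then 1 else 0) * signedIndicator P Q a =
      #{a ∈ P | p a} - #{a ∈ Q | p a} := by
  have split : ∀ a,
      signedIndicator P Q a = (if a ∈ P then 1 else 0) - (if a ∈ Q then 1 else 0) := by
    intro a
    by_cases haP : a ∈ P
    · simp [signedIndicator, haP, disjoint_left.1 hPQ haP]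
    · by_cases haQ : a ∈ Q <;> simp [signedIndicator, haP, haQ]
  simp only [split, mul_sub, sum_sub_distrib, mul_boole, sum_ite_mem, univ_inter, sum_boole]

theorem sum_boole_mul_signedIndicator_eq_zero [DecidableEq β] {f : α → β} (hPQ : Disjoint P Q)
    (hP : Set.InjOn f P) (hQ : Set.InjOn f Q) (h : P.image f = Q.image f) (b : β) :
    ∑ a, (if f a = b then 1 else 0) * signedIndicator P Q a = 0 := by
  rw [sum_boole_mul_signedIndicator hPQ, card_filter_eq_of_injOn_of_image_eq hP hQ h, sub_self]

end

@[simps]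
def finThreeArrowEquiv (α : Type*) : (Fin 3 → α) ≃ α × α × α where
  toFun x := (x 0, x 1, x 2)
  invFun t := ![t.1, t.2.1, t.2.2]
  left_inv x := by ext i; fin_cases i <;> rfl
  right_inv _ := rfl

section LatinTrade

variable {α : Type*} [DecidableEq α] [Fintype α] {P Q : Finset (α × α × α)}

theorem sum_cell_mul_signedIndicator_eq_zero (hPQ : Disjoint P Q)
    (hcells : ∀ i j, (∃ s, (i, j, s) ∈ P) ↔ (∃ s, (i, j, s) ∈ Q))
    (hPcell : ∀ i j s s', (i, j, s) ∈ P → (i, j, s') ∈ P → s = s')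
    (hQcell : ∀ i j s s', (i, j, s) ∈ Q → (i, j, s') ∈ Q → s = s') (i j : α) :
    ∑ t, (if t.1 = i ∧ t.2.1 = j then 1 else 0) * signedIndicator P Q t = 0 := by
  have injOn : ∀ {R : Finset (α × α × α)},
      (∀ i j s s', (i, j, s) ∈ R → (i, j, s') ∈ R → s = s') →
      Set.InjOn (fun t : α × α × α => (t.1, t.2.1)) R := by
    rintro R hR ⟨i, j, s⟩ h ⟨_, _, s'⟩ h' he
    obtain ⟨rfl, rfl⟩ := Prod.mk.inj he
    rw [hR i j s s' h h']
  have himage : P.image (fun t => (t.1, t.2.1)) = Q.image (fun t => (t.1, t.2.1)) := by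
    ext ⟨i, j⟩; simpa using hcells i j
  simpa using sum_boole_mul_signedIndicator_eq_zero hPQ (injOn hPcell) (injOn hQcell) himage (i, j)

theorem sum_row_mul_signedIndicator_eq_zero (hPQ : Disjoint P Q)
    (hrows : ∀ r s, (∃ c, (r, c, s) ∈ P) ↔ (∃ c, (r, c, s) ∈ Q))
    (hProw : ∀ r c c' s, (r, c, s) ∈ P → (r, c', s) ∈ P → c = c')
    (hQrow : ∀ r c c' s, (r, c, s) ∈ Q → (r, c', s) ∈ Q → c = c') (r s : α) :
    ∑ t, (if t.1 = r ∧ t.2.2 = s then 1 else 0) * signedIndicator P Q t = 0 := by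
  have injOn : ∀ {R : Finset (α × α × α)},
      (∀ r c c' s, (r, c, s) ∈ R → (r, c', s) ∈ R → c = c') →
      Set.InjOn (fun t : α × α × α => (t.1, t.2.2)) R := by
    rintro R hR ⟨r, c, s⟩ h ⟨_, c', _⟩ h' he
    obtain ⟨rfl, rfl⟩ := Prod.mk.inj he
    rw [hR r c c' s h h']
  have himage : P.image (fun t => (t.1, t.2.2)) = Q.image (fun t => (t.1, t.2.2)) := by
    ext ⟨r, s⟩; simpa using hrows r s
  simpa using sum_boole_mul_signedIndicator_eq_zero hPQ (injOn hProw) (injOn hQrow) himage (r, s)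

theorem sum_col_mul_signedIndicator_eq_zero (hPQ : Disjoint P Q)
    (hcols : ∀ c s, (∃ r, (r, c, s) ∈ P) ↔ (∃ r, (r, c, s) ∈ Q))
    (hPcol : ∀ r r' c s, (r, c, s) ∈ P → (r', c, s) ∈ P → r = r')
    (hQcol : ∀ r r' c s, (r, c, s) ∈ Q → (r', c, s) ∈ Q → r = r') (c s : α) :
    ∑ t, (if t.2.1 = c ∧ t.2.2 = s then 1 else 0) * signedIndicator P Q t = 0 := by
  have injOn : ∀ {R : Finset (α × α × α)},
      (∀ r r' c s, (r, c, s) ∈ R → (r', c, s) ∈ R → r = r') →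
      Set.InjOn (Prod.snd : α × α × α → α × α) R := by
    rintro R hR ⟨r, c, s⟩ h ⟨r', _, _⟩ h' he
    obtain ⟨rfl, rfl⟩ := Prod.mk.inj he
    rw [hR r r' c s h h']
  have himage : P.image Prod.snd = Q.image Prod.snd := by
    ext ⟨c, s⟩; simpa using hcols c s
  simpa [Prod.ext_iff] using
    sum_boole_mul_signedIndicator_eq_zero hPQ (injOn hPcol) (injOn hQcol) himage (c, s)

end LatinTrade

theorem inclusionMatrix_mulVec_signedIndicator_apply {v k : ℕ}
    (P Q : Finset (Fin v × Fin v × Fin v))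
    (r : {I : Finset (Fin 3) // I.card = k} × (Fin 3 → Fin v)) :
    (inclusionMatrix v 3 k *ᵥ (signedIndicator P Q ∘ finThreeArrowEquiv _)) r =
      ∑ t, (if ∀ i ∈ r.1.1, (finThreeArrowEquiv _).symm t i = r.2 i then 1 else 0) *
        signedIndicator P Q t := by
  rw [← (finThreeArrowEquiv _).sum_comp]
  simp only [Equiv.symm_apply_apply]
  rfl

theorem latinTrade_mem_nullspace_general (v : ℕ)
    (P Q : Finset (Fin v × Fin v × Fin v))
    -- (1) same set of occupied cells
    (hcells : ∀ i j : Fin v, (∃ s, (i, j, s) ∈ P) ↔ (∃ s, (i, j, s) ∈ Q))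
    -- (1) at most one symbol per cell
    (hPcell : ∀ i j s s', (i, j, s) ∈ P → (i, j, s') ∈ P → s = s')
    (hQcell : ∀ i j s s', (i, j, s) ∈ Q → (i, j, s') ∈ Q → s = s')
    -- (2) the symbols of `P` and `Q` differ at every occupied cell
    (hdisj : ∀ i j s s', (i, j, s) ∈ P → (i, j, s') ∈ Q → s ≠ s')
    -- (3) each row of `P` and of `Q` contains the same set of symbols,
    -- each at most once
    (hrows : ∀ r s : Fin v, (∃ c, (r, c, s) ∈ P) ↔ (∃ c, (r, c, s) ∈ Q))
    (hProw : ∀ r c c' s, (r, c, s) ∈ P → (r, c', s) ∈ P → c = c')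
    (hQrow : ∀ r c c' s, (r, c, s) ∈ Q → (r, c', s) ∈ Q → c = c')
    -- (4) each column of `P` and of `Q` contains the same set of symbols,
    -- each at most once
    (hcols : ∀ c s : Fin v, (∃ r, (r, c, s) ∈ P) ↔ (∃ r, (r, c, s) ∈ Q))
    (hPcol : ∀ r r' c s, (r, c, s) ∈ P → (r', c, s) ∈ P → r = r')
    (hQcol : ∀ r r' c s, (r, c, s) ∈ Q → (r', c, s) ∈ Q → r = r')
    -- the signed frequency vector of the trade `(P,Q)`
    (T : (Fin 3 → Fin v) → ℝ)
    (hT : ∀ x : Fin 3 → Fin v,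
      T x = if (x 0, x 1, x 2) ∈ P then 1
            else if (x 0, x 1, x 2) ∈ Q then -1 else 0) :
    (inclusionMatrix v 3 2).mulVec T = 0 := by
  obtain rfl : T = signedIndicator P Q ∘ finThreeArrowEquiv _ := funext hT
  have hPQ : Disjoint P Q := disjoint_left.2 fun {t} hP hQ => hdisj _ _ _ _ hP hQ rfl
  have pairs : ∀ I : Finset (Fin 3), #I = 2 → I = {0, 1} ∨ I = {0, 2} ∨ I = {1, 2} := by
    decide
  funext ⟨⟨I, hI⟩, u⟩
  rw [inclusionMatrix_mulVec_signedIndicator_apply, Pi.zero_apply]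
  rcases pairs I hI with rfl | rfl | rfl
  · simpa using sum_cell_mul_signedIndicator_eq_zero hPQ hcells hPcell hQcell (u 0) (u 1)
  · simpa using sum_row_mul_signedIndicator_eq_zero hPQ hrows hProw hQrow (u 0) (u 2)
  · simpa using sum_col_mul_signedIndicator_eq_zero hPQ hcols hPcol hQcol (u 1) (u 2)

theorem latinTrade_mem_nullspace (v : ℕ) (hv : 1 ≤ v)
    (P Q : Finset (Fin v × Fin v × Fin v))
    -- (1) same set of occupied cells
    (hcells : ∀ i j : Fin v, (∃ s, (i, j, s) ∈ P) ↔ (∃ s, (i, j, s) ∈ Q))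
    -- (1) at most one symbol per cell
    (hPcell : ∀ i j s s', (i, j, s) ∈ P → (i, j, s') ∈ P → s = s')
    (hQcell : ∀ i j s s', (i, j, s) ∈ Q → (i, j, s') ∈ Q → s = s')
    -- (2) the symbols of `P` and `Q` differ at every occupied cell
    (hdisj : ∀ i j s s', (i, j, s) ∈ P → (i, j, s') ∈ Q → s ≠ s')
    -- (3) each row of `P` and of `Q` contains the same set of symbols,
    -- each at most once
    (hrows : ∀ r s : Fin v, (∃ c, (r, c, s) ∈ P) ↔ (∃ c, (r, c, s) ∈ Q))
    (hProw : ∀ r c c' s, (r, c, s) ∈ P → (r, c', s) ∈ P → c = c')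
    (hQrow : ∀ r c c' s, (r, c, s) ∈ Q → (r, c', s) ∈ Q → c = c')
    -- (4) each column of `P` and of `Q` contains the same set of symbols,
    -- each at most once
    (hcols : ∀ c s : Fin v, (∃ r, (r, c, s) ∈ P) ↔ (∃ r, (r, c, s) ∈ Q))
    (hPcol : ∀ r r' c s, (r, c, s) ∈ P → (r', c, s) ∈ P → r = r')
    (hQcol : ∀ r r' c s, (r, c, s) ∈ Q → (r', c, s) ∈ Q → r = r')
    -- the signed frequency vector of the trade `(P,Q)`
    (T : (Fin 3 → Fin v) → ℝ)
    (hT : ∀ x : Fin 3 → Fin v,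
      T x = if (x 0, x 1, x 2) ∈ P then 1
            else if (x 0, x 1, x 2) ∈ Q then -1 else 0) :
    (inclusionMatrix v 3 2).mulVec T = 0 :=
  latinTrade_mem_nullspace_general v P Q hcells hPcell hQcell hdisj hrows hProw hQrow hcols hPcol
    hQcol T hT
end

section
/- Let v ≥ 2 and let (P,Q) be a Latin trade of order v with signed frequency vector T ∈ ℝ^(V³) (T(i,j,s) = 1 if (i,j,s) ∈ P, −1 if (i,j,s) ∈ Q, 0 otherwise). Then T is a real linear combination of the intercalate vectors T_{ijk}, 1 ≤ i,j,k ≤ v−1, where T_{ijk}(a,b,c) = (δ_{a,0} − δ_{a,i})·(δ_{b,0} − δ_{b,j})·(δ_{c,0} − δ_{c,k}). -/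
/-!
Write `e_k(a) = δ_{a,0} − δ_{a,k}`, so that `T_{ijk}(a,b,c) = e_i(a) e_j(b) e_k(c)`. For `g : V → ℝ`
with `∑ g = 0` one has `∑_k g(k) e_k(a) = δ_{a,0} ∑ g − g(a) = −g(a)`, and the `k = 0` term
vanishes since `e_0 = 0`. Applying this in each of the three coordinates shows that every
`F : V³ → ℝ` whose line sums in all three directions vanish equals
`−∑_{i,j,k} F(i,j,k) T_{ijk}`. The signed frequency vector of a Latin trade is such an `F`:
each line meets `P` and `Q` in the same number (zero or one) of triples, and never in a common one.
-/

open Finset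

lemma kdel0_eq_kdel {v : ℕ} (a k : Fin v) (hk : (k : ℕ) = 0) : kdel0 a = kdel a k := by
  simp only [kdel0, kdel, Fin.ext_iff, hk]

lemma interT_mem_span {v : ℕ} (i j k : Fin v) :
    interT i j k ∈ Submodule.span ℝ
        (Set.range
          (fun p : {i : Fin v // (i : ℕ) ≠ 0} × {j : Fin v // (j : ℕ) ≠ 0} ×
              {k : Fin v // (k : ℕ) ≠ 0} =>
            interT p.1.1 p.2.1.1 p.2.2.1)) := by
  by_cases h : (i : ℕ) ≠ 0 ∧ (j : ℕ) ≠ 0 ∧ (k : ℕ) ≠ 0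
  · exact Submodule.subset_span ⟨⟨⟨i, h.1⟩, ⟨j, h.2.1⟩, ⟨k, h.2.2⟩⟩, rfl⟩
  · suffices interT i j k = 0 by rw [this]; exact Submodule.zero_mem _
    funext x
    simp only [not_and_or, not_not] at h
    rcases h with hi | hj | hk
    · simp [interT, kdel0_eq_kdel (x 0) i hi]
    · simp [interT, kdel0_eq_kdel (x 1) j hj]
    · simp [interT, kdel0_eq_kdel (x 2) k hk]

lemma sum_mul_kdel0_sub_kdel {v : ℕ} (g : Fin v → ℝ) (hg : ∑ k, g k = 0) (a : Fin v) :
    ∑ k, g k * (kdel0 a - kdel a k) = -g a := by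
  simp [mul_sub, sum_sub_distrib, ← sum_mul, hg, kdel]

lemma sum_mul_interT {v : ℕ} (F : Fin v → Fin v → Fin v → ℝ)
    (h₁ : ∀ b c, ∑ a, F a b c = 0) (h₂ : ∀ a c, ∑ b, F a b c = 0)
    (h₃ : ∀ a b, ∑ c, F a b c = 0) (x : Fin 3 → Fin v) :
    ∑ i, ∑ j, ∑ k, F i j k * interT i j k x = -F (x 0) (x 1) (x 2) := by
  set e : Fin v → Fin v → ℝ := fun a k => kdel0 a - kdel a k
  calc ∑ i, ∑ j, ∑ k, F i j k * interT i j k x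
      = ∑ i, (∑ j, (∑ k, F i j k * e (x 2) k) * e (x 1) j) * e (x 0) i := by
        simp only [interT, e, sum_mul]
        refine Fintype.sum_congr _ _ fun i => Fintype.sum_congr _ _ fun j =>
          Fintype.sum_congr _ _ fun k => by ring
    _ = ∑ i, (∑ j, -F i j (x 2) * e (x 1) j) * e (x 0) i := by
        simp only [e, sum_mul_kdel0_sub_kdel _ (h₃ _ _)]
    _ = -F (x 0) (x 1) (x 2) := by
        simp only [e, neg_mul, sum_neg_distrib, sum_mul_kdel0_sub_kdel _ (h₂ _ _), neg_neg,
          sum_mul_kdel0_sub_kdel _ (h₁ _ _)]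

lemma sum_ite_ite_eq_zero {α : Type*} [Fintype α] (p q : α → Prop)
    [DecidablePred p] [DecidablePred q] (hpq : ∀ x, p x → ¬q x)
    (hp : ∀ x y, p x → p y → x = y) (hq : ∀ x y, q x → q y → x = y)
    (hiff : (∃ x, p x) ↔ (∃ x, q x)) :
    ∑ x, (if p x then (1 : ℝ) else if q x then -1 else 0) = 0 := by
  have hcard : #{x | p x} = #{x | q x} := by
    have hp₁ : #{x | p x} ≤ 1 :=
      card_le_one.mpr fun x hx y hy => hp x y (mem_filter.mp hx).2 (mem_filter.mp hy).2
    have hq₁ : #{x | q x} ≤ 1 :=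
      card_le_one.mpr fun x hx y hy => hq x y (mem_filter.mp hx).2 (mem_filter.mp hy).2
    have : 0 < #{x | p x} ↔ 0 < #{x | q x} := by
      simpa [card_pos, filter_nonempty_iff] using hiff
    omega
  have hsplit : ∀ x, (if p x then (1 : ℝ) else if q x then -1 else 0) =
      (if p x then 1 else 0) - (if q x then 1 else 0) := fun x => by
    by_cases hx : p x
    · simp [hx, hpq x hx]
    · split_ifs <;> simp
  simp only [hsplit, sum_sub_distrib, sum_boole, hcard, sub_self]

theorem latinTrade_mem_span_intercalates_general (v : ℕ)
    (P Q : Finset (Fin v × Fin v × Fin v))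
    -- (1) same set of occupied cells
    (hcells : ∀ i j : Fin v, (∃ s, (i, j, s) ∈ P) ↔ (∃ s, (i, j, s) ∈ Q))
    -- (1) at most one symbol per cell
    (hPcell : ∀ i j s s', (i, j, s) ∈ P → (i, j, s') ∈ P → s = s')
    (hQcell : ∀ i j s s', (i, j, s) ∈ Q → (i, j, s') ∈ Q → s = s')
    -- (2) the symbols of `P` and `Q` differ at every occupied cell
    (hdisj : ∀ i j s s', (i, j, s) ∈ P → (i, j, s') ∈ Q → s ≠ s')
    -- (3) each row of `P` and of `Q` contains the same set of symbols,
    -- each at most once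
    (hrows : ∀ r s : Fin v, (∃ c, (r, c, s) ∈ P) ↔ (∃ c, (r, c, s) ∈ Q))
    (hProw : ∀ r c c' s, (r, c, s) ∈ P → (r, c', s) ∈ P → c = c')
    (hQrow : ∀ r c c' s, (r, c, s) ∈ Q → (r, c', s) ∈ Q → c = c')
    -- (4) each column of `P` and of `Q` contains the same set of symbols,
    -- each at most once
    (hcols : ∀ c s : Fin v, (∃ r, (r, c, s) ∈ P) ↔ (∃ r, (r, c, s) ∈ Q))
    (hPcol : ∀ r r' c s, (r, c, s) ∈ P → (r', c, s) ∈ P → r = r')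
    (hQcol : ∀ r r' c s, (r, c, s) ∈ Q → (r', c, s) ∈ Q → r = r')
    -- the signed frequency vector of the trade `(P,Q)`
    (T : (Fin 3 → Fin v) → ℝ)
    (hT : ∀ x : Fin 3 → Fin v,
      T x = if (x 0, x 1, x 2) ∈ P then 1
            else if (x 0, x 1, x 2) ∈ Q then -1 else 0) :
    T ∈ Submodule.span ℝ
        (Set.range
          (fun p : {i : Fin v // (i : ℕ) ≠ 0} × {j : Fin v // (j : ℕ) ≠ 0} ×
              {k : Fin v // (k : ℕ) ≠ 0} =>
            interT p.1.1 p.2.1.1 p.2.2.1)) := by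
  set F : Fin v → Fin v → Fin v → ℝ :=
    fun a b c => if (a, b, c) ∈ P then 1 else if (a, b, c) ∈ Q then -1 else 0
  have h₁ : ∀ b c, ∑ a, F a b c = 0 := fun b c =>
    sum_ite_ite_eq_zero _ _ (fun a hP hQ => hdisj a b c c hP hQ rfl)
      (fun _ _ => hPcol _ _ b c) (fun _ _ => hQcol _ _ b c) (hcols b c)
  have h₂ : ∀ a c, ∑ b, F a b c = 0 := fun a c =>
    sum_ite_ite_eq_zero _ _ (fun b hP hQ => hdisj a b c c hP hQ rfl)
      (fun _ _ => hProw a _ _ c) (fun _ _ => hQrow a _ _ c) (hrows a c)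
  have h₃ : ∀ a b, ∑ c, F a b c = 0 := fun a b =>
    sum_ite_ite_eq_zero _ _ (fun c hP hQ => hdisj a b c c hP hQ rfl)
      (hPcell a b) (hQcell a b) (hcells a b)
  have hTF : T = ∑ i, ∑ j, ∑ k, (-F i j k) • interT i j k := by
    funext x
    simp only [Finset.sum_apply, Pi.smul_apply, smul_eq_mul, neg_mul, sum_neg_distrib,
      sum_mul_interT F h₁ h₂ h₃, neg_neg, hT, F]
  rw [hTF]
  exact Submodule.sum_mem _ fun i _ => Submodule.sum_mem _ fun j _ => Submodule.sum_mem _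
    fun k _ => Submodule.smul_mem _ _ (interT_mem_span i j k)

theorem latinTrade_mem_span_intercalates (v : ℕ) (hv : 2 ≤ v)
    (P Q : Finset (Fin v × Fin v × Fin v))
    -- (1) same set of occupied cells
    (hcells : ∀ i j : Fin v, (∃ s, (i, j, s) ∈ P) ↔ (∃ s, (i, j, s) ∈ Q))
    -- (1) at most one symbol per cell
    (hPcell : ∀ i j s s', (i, j, s) ∈ P → (i, j, s') ∈ P → s = s')
    (hQcell : ∀ i j s s', (i, j, s) ∈ Q → (i, j, s') ∈ Q → s = s')
    -- (2) the symbols of `P` and `Q` differ at every occupied cell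
    (hdisj : ∀ i j s s', (i, j, s) ∈ P → (i, j, s') ∈ Q → s ≠ s')
    -- (3) each row of `P` and of `Q` contains the same set of symbols,
    -- each at most once
    (hrows : ∀ r s : Fin v, (∃ c, (r, c, s) ∈ P) ↔ (∃ c, (r, c, s) ∈ Q))
    (hProw : ∀ r c c' s, (r, c, s) ∈ P → (r, c', s) ∈ P → c = c')
    (hQrow : ∀ r c c' s, (r, c, s) ∈ Q → (r, c', s) ∈ Q → c = c')
    -- (4) each column of `P` and of `Q` contains the same set of symbols,
    -- each at most once
    (hcols : ∀ c s : Fin v, (∃ r, (r, c, s) ∈ P) ↔ (∃ r, (r, c, s) ∈ Q))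
    (hPcol : ∀ r r' c s, (r, c, s) ∈ P → (r', c, s) ∈ P → r = r')
    (hQcol : ∀ r r' c s, (r, c, s) ∈ Q → (r', c, s) ∈ Q → r = r')
    -- the signed frequency vector of the trade `(P,Q)`
    (T : (Fin 3 → Fin v) → ℝ)
    (hT : ∀ x : Fin 3 → Fin v,
      T x = if (x 0, x 1, x 2) ∈ P then 1
            else if (x 0, x 1, x 2) ∈ Q then -1 else 0) :
    T ∈ Submodule.span ℝ
        (Set.range
          (fun p : {i : Fin v // (i : ℕ) ≠ 0} × {j : Fin v // (j : ℕ) ≠ 0} ×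
              {k : Fin v // (k : ℕ) ≠ 0} =>
            interT p.1.1 p.2.1.1 p.2.2.1)) :=
  latinTrade_mem_span_intercalates_general v P Q hcells hPcell hQcell hdisj hrows hProw hQrow hcols
    hPcol hQcol T hT
end

section
/- Let t ≥ 1, v ≥ 2, and for each l ∈ {1,…,t+1} let i_l, j_l ∈ V with i_l ≠ j_l. Define the vector T ∈ ℝ^(V^(t+1)) by T(y_1,…,y_{t+1}) = ∏_{l=1}^{t+1} (δ_{y_l, i_l} − δ_{y_l, j_l}). Then M_t(v,t+1) · T = 0, i.e., T lies in the null space of the t-inclusion matrix M_t(v,t+1). -/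
/-! Row `(I, u)` of `M_t(v, t+1)` sums `T` over the tuples agreeing with `u` on `I`. Since `T` is a
product of one-variable factors, this sum factors coordinatewise, and at the coordinate missed by
the `t`-set `I` the factor is `∑ₐ (δ_{a,iₘ} − δ_{a,jₘ}) = 1 − 1 = 0`. -/

open Finset

theorem Finset.sum_filter_eqOn_prod {ι α R : Type*} [Fintype ι] [DecidableEq ι] [Fintype α]
    [CommSemiring R] (I : Finset ι) (u : ι → α)
    [DecidablePred fun x : ι → α => ∀ l ∈ I, x l = u l] (f : ι → α → R) :
    ∑ x ∈ univ.filter fun x : ι → α => ∀ l ∈ I, x l = u l, ∏ l, f l (x l) =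
      ∏ l, if l ∈ I then f l (u l) else ∑ a, f l a := by
  have hfactor (l : ι) : (if l ∈ I then f l (u l) else ∑ a, f l a) =
      ∑ a ∈ (if l ∈ I then {u l} else univ : Finset α), f l a := by
    split_ifs <;> simp
  rw [Fintype.prod_congr _ _ hfactor, prod_univ_sum]
  congr 1
  ext x
  simp only [mem_filter, mem_univ, true_and, Fintype.mem_piFinset]
  refine forall_congr' fun l => ?_
  split_ifs with hl <;> simp [hl]

theorem Finset.sum_filter_eqOn_prod_eq_zero {ι α R : Type*} [Fintype ι] [DecidableEq ι]
    [Fintype α] [CommSemiring R] {I : Finset ι} (u : ι → α)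
    [DecidablePred fun x : ι → α => ∀ l ∈ I, x l = u l] {f : ι → α → R} {m : ι} (hm : m ∉ I)
    (hf : ∑ a, f m a = 0) :
    ∑ x ∈ univ.filter fun x : ι → α => ∀ l ∈ I, x l = u l, ∏ l, f l (x l) = 0 := by
  rw [sum_filter_eqOn_prod]
  exact prod_eq_zero (mem_univ m) (by simp [hm, hf])

theorem inclusionMatrix_mulVec_apply (v k t : ℕ) (T : (Fin k → Fin v) → ℝ)
    (r : {I : Finset (Fin k) // I.card = t} × (Fin k → Fin v)) :
    (inclusionMatrix v k t).mulVec T r =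
      ∑ x ∈ univ.filter fun x : Fin k → Fin v => ∀ l ∈ r.1.1, x l = r.2 l, T x := by
  simp only [Matrix.mulVec, dotProduct, inclusionMatrix, ite_mul, one_mul, zero_mul, sum_ite,
    sum_const_zero, add_zero]

theorem sum_sub_kdel {v : ℕ} (b c : Fin v) : ∑ a, (kdel a b - kdel a c) = 0 := by
  simp [kdel]

theorem general_intercalate_mem_nullspace_general (t v : ℕ)
    (i j : Fin (t + 1) → Fin v)
    (T : (Fin (t + 1) → Fin v) → ℝ)
    (hT : ∀ y : Fin (t + 1) → Fin v,
      T y = ∏ l : Fin (t + 1), (kdel (y l) (i l) - kdel (y l) (j l))) :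
    (inclusionMatrix v (t + 1) t).mulVec T = 0 := by
  ext ⟨⟨I, hI⟩, u⟩
  obtain ⟨m, hm⟩ : ∃ m, m ∉ I := by
    by_contra! hall
    simp [eq_univ_of_forall hall] at hI
  simp only [inclusionMatrix_mulVec_apply, Pi.zero_apply, hT]
  exact sum_filter_eqOn_prod_eq_zero (f := fun l a => kdel a (i l) - kdel a (j l)) u hm
    (sum_sub_kdel (i m) (j m))

theorem general_intercalate_mem_nullspace (t v : ℕ) (ht : 1 ≤ t) (hv : 2 ≤ v)
    (i j : Fin (t + 1) → Fin v) (hij : ∀ l, i l ≠ j l)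
    (T : (Fin (t + 1) → Fin v) → ℝ)
    (hT : ∀ y : Fin (t + 1) → Fin v,
      T y = ∏ l : Fin (t + 1), (kdel (y l) (i l) - kdel (y l) (j l))) :
    (inclusionMatrix v (t + 1) t).mulVec T = 0 :=
  general_intercalate_mem_nullspace_general t v i j T hT
end

section
/- Let t ≥ 1 and v ≥ 2. The family of (v−1)^(t+1) vectors {T_{(i_1,…,i_{t+1})} : 1 ≤ i_1,…,i_{t+1} ≤ v−1}, where T_{(i_1,…,i_{t+1})}(y_1,…,y_{t+1}) = ∏_{l=1}^{t+1} (δ_{y_l, 0} − δ_{y_l, i_l}), forms a basis over ℝ of the null space of the t-inclusion matrix M_t(v,t+1). -/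
/-- The generalized intercalate vector `T_{(i_1,…,i_{t+1})}`, indexed by
`(t+1)`-tuples `y` over `Fin v`:
`T_{(i_1,…,i_{t+1})}(y_1,…,y_{t+1}) = ∏_l (δ_{y_l,0} − δ_{y_l,i_l})`. -/
def interTgen {t v : ℕ} (f : Fin (t + 1) → {i : Fin v // (i : ℕ) ≠ 0}) :
    (Fin (t + 1) → Fin v) → ℝ :=
  fun y => ∏ l : Fin (t + 1), (kdel0 (y l) - kdel (y l) (f l).1)

/-!
The null space of `M_t(v,t+1)` consists of the arrays all of whose line sums vanish, since
the rows of the matrix are exactly the lines. Every `T_f` is such an array, because each factor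
`δ_0 - δ_i` sums to zero. On tuples with no zero coordinate, `T_f` is `(-1)^(t+1)` times the
indicator of `f`; this gives independence. An array with vanishing line sums that vanishes on
those tuples vanishes everywhere, by induction on the number of zero coordinates (the line
through a zero coordinate expresses the entry through entries with one zero fewer). Hence
`c = (-1)^(t+1) ∑_f c(f) T_f` for every `c` in the null space.
-/

open Finset Function

def LineSumsVanish {ι : Type*} [DecidableEq ι] {v : ℕ} (c : (ι → Fin v) → ℝ) : Prop :=
  ∀ (j : ι) (y : ι → Fin v), ∑ a, c (update y j a) = 0

section LineSums

variable {ι : Type*} [Fintype ι] {v : ℕ}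

lemma sum_agree_off_eq_sum_update [DecidableEq ι] {α : Type*} [Fintype α] [DecidableEq α]
    (j : ι) (u : ι → α) (c : (ι → α) → ℝ) :
    ∑ x, (if ∀ i ∈ ({j}ᶜ : Finset ι), x i = u i then (1 : ℝ) else 0) * c x =
      ∑ a, c (update u j a) := by
  have hline : univ.filter (fun x : ι → α => ∀ i ∈ ({j}ᶜ : Finset ι), x i = u i) =
      univ.image (update u j) := by
    ext x
    simp only [mem_filter, mem_univ, true_and, mem_image, update_eq_iff, exists_eq_left,
      mem_compl, mem_singleton]
    exact forall₂_congr fun _ _ => eq_comm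
  simp only [ite_mul, one_mul, zero_mul]
  rw [← sum_filter, hline, sum_image fun a _ b _ h => update_injective u j h]

def zeroCoords (y : ι → Fin v) : Finset ι := univ.filter fun i => (y i : ℕ) = 0

@[simp]
lemma mem_zeroCoords {y : ι → Fin v} {i : ι} : i ∈ zeroCoords y ↔ (y i : ℕ) = 0 := by
  simp [zeroCoords]

lemma zeroCoords_update_of_ne_zero [DecidableEq ι] (y : ι → Fin v) (j : ι) {a : Fin v}
    (ha : (a : ℕ) ≠ 0) :
    zeroCoords (update y j a) = (zeroCoords y).erase j := by
  ext i
  by_cases hij : i = j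
  · subst hij; simp [zeroCoords, ha]
  · simp [zeroCoords, hij]

lemma LineSumsVanish.eq_zero_of_forall_ne_zero [DecidableEq ι] {c : (ι → Fin v) → ℝ}
    (hc : LineSumsVanish c)
    (h0 : ∀ y : ι → Fin v, (∀ i, (y i : ℕ) ≠ 0) → c y = 0) : c = 0 := by
  suffices h : ∀ n (y : ι → Fin v), (zeroCoords y).card = n → c y = 0 from
    funext fun y => h _ y rfl
  intro n
  induction n with
  | zero =>
    intro y hy
    refine h0 y fun i hi => ?_
    simp only [card_eq_zero, zeroCoords, filter_eq_empty_iff] at hy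
    exact hy (mem_univ i) hi
  | succ n ih =>
    intro y hy
    obtain ⟨j, hj⟩ : (zeroCoords y).Nonempty := card_pos.mp (by omega)
    have hline := hc j y
    rw [← add_sum_erase _ _ (mem_univ (y j)), update_eq_self] at hline
    have hrest : ∑ a ∈ univ.erase (y j), c (update y j a) = 0 := by
      refine sum_eq_zero fun a ha => ih _ ?_
      have ha0 : (a : ℕ) ≠ 0 := fun h =>
        (ne_of_mem_erase ha) (Fin.ext (h.trans (mem_zeroCoords.mp hj).symm))
      rw [zeroCoords_update_of_ne_zero y j ha0, card_erase_of_mem hj, hy,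
        Nat.add_sub_cancel]
    linarith

end LineSums

lemma sum_kdel0_sub_kdel {v : ℕ} (i : Fin v) : ∑ a : Fin v, (kdel0 a - kdel a i) = 0 := by
  have : NeZero v := ⟨i.pos.ne'⟩
  simp [kdel0, kdel, Fin.val_eq_zero_iff, sum_sub_distrib]

lemma exists_eq_compl_singleton {t : ℕ} {I : Finset (Fin (t + 1))} (hI : I.card = t) :
    ∃ j, I = {j}ᶜ := by
  obtain ⟨j, hj⟩ := card_eq_one.mp (by simp [card_compl, hI] : Iᶜ.card = 1)
  exact ⟨j, by rw [← hj, compl_compl]⟩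

lemma mem_ker_inclusionMatrix_iff_s14 {t v : ℕ} (c : (Fin (t + 1) → Fin v) → ℝ) :
    c ∈ LinearMap.ker (inclusionMatrix v (t + 1) t).mulVecLin ↔ LineSumsVanish c := by
  have hrow : ∀ j u (hI : ({j}ᶜ : Finset (Fin (t + 1))).card = t),
      (inclusionMatrix v (t + 1) t).mulVec c (⟨{j}ᶜ, hI⟩, u) = ∑ a, c (update u j a) :=
    fun j u _ => by
      simp only [Matrix.mulVec, dotProduct, inclusionMatrix]
      convert sum_agree_off_eq_sum_update j u c
  rw [LinearMap.mem_ker, Matrix.mulVecLin_apply, funext_iff]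
  constructor
  · intro h j y
    rw [← hrow j y (by simp [card_compl])]
    exact h _
  · rintro h ⟨⟨I, hI⟩, u⟩
    obtain ⟨j, rfl⟩ := exists_eq_compl_singleton hI
    exact (hrow j u hI).trans (h j u)

section Intercalates

variable {t v : ℕ}

lemma lineSumsVanish_interTgen (f : Fin (t + 1) → {i : Fin v // (i : ℕ) ≠ 0}) :
    LineSumsVanish (interTgen f) := by
  intro j y
  have hsplit : ∀ a, interTgen f (update y j a) =
      (kdel0 a - kdel a (f j).1) * ∏ l ∈ univ.erase j, (kdel0 (y l) - kdel (y l) (f l).1) := by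
    intro a
    rw [interTgen, ← mul_prod_erase univ _ (mem_univ j), update_self]
    congr 1
    exact prod_congr rfl fun l hl => by rw [update_of_ne (ne_of_mem_erase hl)]
  simp only [hsplit, ← sum_mul, sum_kdel0_sub_kdel, zero_mul]

lemma interTgen_mem_ker (f : Fin (t + 1) → {i : Fin v // (i : ℕ) ≠ 0}) :
    interTgen f ∈ LinearMap.ker (inclusionMatrix v (t + 1) t).mulVecLin :=
  (mem_ker_inclusionMatrix_iff_s14 _).2 (lineSumsVanish_interTgen f)

lemma interTgen_apply_val (f g : Fin (t + 1) → {i : Fin v // (i : ℕ) ≠ 0}) :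
    interTgen f (fun l => (g l).1) = if f = g then (-1) ^ (t + 1) else 0 := by
  have hfactor : ∀ l, kdel0 (g l).1 - kdel (g l).1 (f l).1 =
      -1 * if f l = g l then 1 else 0 := by
    intro l
    simp only [kdel0, kdel, (g l).2, if_false, Subtype.ext_iff, eq_comm (a := (g l).1)]
    split_ifs <;> norm_num
  simp only [interTgen, hfactor, prod_mul_distrib, prod_const, card_univ, Fintype.card_fin,
    prod_boole, mem_univ, forall_const, ← funext_iff]
  split_ifs <;> simp

lemma linearIndependent_interTgen :
    LinearIndependent ℝ (fun f : Fin (t + 1) → {i : Fin v // (i : ℕ) ≠ 0} => interTgen f) := by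
  rw [Fintype.linearIndependent_iff]
  intro g hg f₀
  have h := congrFun hg fun l => (f₀ l).1
  simp only [Finset.sum_apply, Pi.smul_apply, smul_eq_mul, interTgen_apply_val, mul_ite, mul_zero,
    sum_ite_eq', mem_univ, if_true, Pi.zero_apply] at h
  exact (mul_eq_zero.mp h).resolve_right (pow_ne_zero _ (by norm_num))

lemma eq_sum_interTgen_of_mem_ker {c : (Fin (t + 1) → Fin v) → ℝ}
    (hc : c ∈ LinearMap.ker (inclusionMatrix v (t + 1) t).mulVecLin) :
    c = ∑ f, ((-1) ^ (t + 1) * c (fun l => (f l).1)) • interTgen f := by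
  set s := ∑ f, ((-1) ^ (t + 1) * c (fun l => (f l).1)) • interTgen f
  have hs : s ∈ LinearMap.ker (inclusionMatrix v (t + 1) t).mulVecLin :=
    Submodule.sum_mem _ fun f _ => Submodule.smul_mem _ _ (interTgen_mem_ker f)
  rw [← sub_eq_zero]
  refine ((mem_ker_inclusionMatrix_iff_s14 _).1 (sub_mem hc hs)).eq_zero_of_forall_ne_zero
    fun y hy => ?_
  obtain ⟨g, rfl⟩ : ∃ g : Fin (t + 1) → {i : Fin v // (i : ℕ) ≠ 0}, (fun l => (g l).1) = y :=
    ⟨fun l => ⟨y l, hy l⟩, rfl⟩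
  have hsign : ((-1 : ℝ) ^ (t + 1)) * (-1) ^ (t + 1) = 1 := by rw [← mul_pow]; norm_num
  simp only [s, Pi.sub_apply, Finset.sum_apply, Pi.smul_apply, smul_eq_mul, interTgen_apply_val,
    mul_ite, mul_zero, sum_ite_eq', mem_univ, if_true]
  linear_combination -(c fun l => (g l).1) * hsign

end Intercalates

theorem general_intercalates_basis_nullspace_general (t v : ℕ) :
    LinearIndependent ℝ
        (fun f : Fin (t + 1) → {i : Fin v // (i : ℕ) ≠ 0} => interTgen f) ∧
      Submodule.span ℝ
          (Set.range
            (fun f : Fin (t + 1) → {i : Fin v // (i : ℕ) ≠ 0} => interTgen f)) =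
        LinearMap.ker (inclusionMatrix v (t + 1) t).mulVecLin := by
  refine ⟨linearIndependent_interTgen, le_antisymm ?_ fun c hc => ?_⟩
  · exact Submodule.span_le.2 (Set.range_subset_iff.2 interTgen_mem_ker)
  · rw [eq_sum_interTgen_of_mem_ker hc]
    exact Submodule.sum_mem _ fun f _ => Submodule.smul_mem _ _ (Submodule.subset_span ⟨f, rfl⟩)

/-- The family `{T_{(i_1,…,i_{t+1})} : 1 ≤ i_1,…,i_{t+1} ≤ v−1}` is a basis
of the null space of `M_t(v,t+1)`: it is linearly independent and spans the
null space. -/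
theorem general_intercalates_basis_nullspace (t v : ℕ) (ht : 1 ≤ t) (hv : 2 ≤ v) :
    LinearIndependent ℝ
        (fun f : Fin (t + 1) → {i : Fin v // (i : ℕ) ≠ 0} => interTgen f) ∧
      Submodule.span ℝ
          (Set.range
            (fun f : Fin (t + 1) → {i : Fin v // (i : ℕ) ≠ 0} => interTgen f)) =
        LinearMap.ker (inclusionMatrix v (t + 1) t).mulVecLin :=
  general_intercalates_basis_nullspace_general t v
end
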